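/- Fix d ≥ 1, a real matrix A, and a time-symmetric second-order real basic method S for A. Let n ≥ 2 and let α_1, …, α_s ∈ ℂ be symmetric-conjugate, i.e. α_{s+1−j} = conj(α_j) for all j, and suppose the composition P(h) = S(α_s h)·S(α_{s−1} h)⋯S(α_1 h) is of odd order 2n−1, i.e. (fun h : ℝ => P(h) − exp(h·A)) is O(h^{2n}) as h → 0. Let R(h) be the entrywise real part of P(h). Then (fun h : ℝ => R(h) − exp(h·A)) is O(h^{2n+1}) as h → 0 (R is of order 2n), and R is pseudo-symmetric of order 4n−1, i.e. (fun h : ℝ => R(−h)·R(h) − 1) is O(h^{4n}) as h → 0. -/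

import Mathlib

/-!
Let `Q h` be the entrywise conjugate of `P h`. Since `S` is real and the coefficients are
symmetric-conjugate, `Q h` is the product of the `S (α_j h)` in the opposite order, so time symmetry
of `S` gives `Q h = P (-h)⁻¹`: `Q` is the adjoint of `P`. As `P` is analytic and
`P h - exp (h A) = O(h^{2n})`, we have `P h - exp (h A) = C h^{2n} + O(h^{2n+1})`, and then
`Q h - exp (h A) = -P (-h)⁻¹ (P (-h) - exp (-h A)) exp (h A) = -C h^{2n} + O(h^{2n+1})` because
`2n` is even. Hence the leading errors cancel in `R = (P + Q) / 2`. For pseudo-symmetry, with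
`X = P (-h) P h` one has `4 (R (-h) R h - 1) = X⁻¹ (X - 1)²`, and `X - 1 = O(h^{2n})`.
-/

open Matrix Asymptotics Filter NormedSpace Topology

-- The proofs in this section use the operator norm on matrices, so they come before the entrywise
-- sup norm is made an instance.
section MatrixExp

variable {ι 𝕂 : Type*} [Fintype ι] [DecidableEq ι] [RCLike 𝕂]

theorem Matrix.analyticAt_exp_smul_apply (B : Matrix ι ι 𝕂) (i j : ι) (t : 𝕂) :
    AnalyticAt 𝕂 (fun t : 𝕂 => exp (t • B) i j) t := by
  -- `exp` is analytic for the operator norm, and the entries do not see the choice of norm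
  let : NormedRing (Matrix ι ι 𝕂) := Matrix.linftyOpNormedRing
  let : NormedAlgebra 𝕂 (Matrix ι ι 𝕂) := Matrix.linftyOpNormedAlgebra
  have : ProperSpace (Matrix ι ι 𝕂) := FiniteDimensional.proper_rclike 𝕂 _
  have hexp : AnalyticAt 𝕂 (fun t : 𝕂 => exp (t • B)) t :=
    (exp_analytic (t • B)).comp (f := fun t : 𝕂 => t • B)
      (((ContinuousLinearMap.id 𝕂 𝕂).smulRight B).analyticAt t)
  exact ((Matrix.entryLinearMap 𝕂 𝕂 i j).toContinuousLinearMap.analyticAt _).comp hexp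

theorem Matrix.map_exp_ofReal (M : Matrix ι ι ℝ) :
    (exp M).map Complex.ofReal = exp (M.map Complex.ofReal) := by
  let : NormedRing (Matrix ι ι ℝ) := Matrix.linftyOpNormedRing
  let : NormedRing (Matrix ι ι ℂ) := Matrix.linftyOpNormedRing
  let : NormedAlgebra ℝ (Matrix ι ι ℝ) := Matrix.linftyOpNormedAlgebra
  let : NormedAlgebra ℚ (Matrix ι ι ℝ) := Matrix.linftyOpNormedAlgebra
  exact map_exp Complex.ofRealHom.mapMatrix (continuous_id.matrix_map Complex.continuous_ofReal) M

end MatrixExp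

attribute [local instance] Matrix.normedAddCommGroup Matrix.normedSpace

section OddPart

variable {𝕜 E : Type*} [NontriviallyNormedField 𝕜] [NormedAddCommGroup E] [NormedSpace 𝕜 E]

theorem Asymptotics.IsBigO.comp_neg_pow {F : Type*} [Norm F] {f : 𝕜 → F} {k : ℕ}
    (h : f =O[𝓝 0] fun z => z ^ k) : (fun z => f (-z)) =O[𝓝 0] fun z => z ^ k := by
  have hneg : Tendsto (fun z : 𝕜 => -z) (𝓝 0) (𝓝 0) := by
    simpa using (continuous_neg (G := 𝕜)).tendsto 0
  exact (h.comp_tendsto hneg).trans (isBigO_of_le _ fun z => by simp [norm_pow])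

theorem AnalyticAt.exists_eventuallyEq_pow_smul_of_isBigO {f : 𝕜 → E} (hf : AnalyticAt 𝕜 f 0)
    {k : ℕ} (hO : f =O[𝓝 0] fun z => z ^ k) :
    ∃ g, AnalyticAt 𝕜 g 0 ∧ ∀ᶠ z in 𝓝 0, f z = z ^ k • g z := by
  simpa only [sub_zero] using (natCast_le_analyticOrderAt hf (n := k)).mp <| by
    by_contra! hlt
    obtain ⟨m, hm⟩ := ENat.ne_top_iff_exists.mp hlt.ne_top
    obtain ⟨g, hg, hg0, hfg⟩ := hf.analyticOrderAt_eq_natCast.mp hm.symm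
    have hmk : m < k := by exact_mod_cast hm ▸ hlt
    -- if the order `m` were `< k`: off `0`, `g z = (z ^ m)⁻¹ • f z = O(z ^ (k - m))` tends to `0`
    have hgO : g =O[𝓝[≠] 0] fun z => z ^ (k - m) := by
      have h := (isBigO_refl (fun z : 𝕜 => (z ^ m)⁻¹) (𝓝[≠] 0)).smul
        (hO.mono nhdsWithin_le_nhds)
      refine h.congr' ?_ ?_
      · filter_upwards [self_mem_nhdsWithin, hfg.filter_mono nhdsWithin_le_nhds] with z hz hfz
        rw [hfz, sub_zero, smul_smul, inv_mul_cancel₀ (pow_ne_zero _ hz), one_smul]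
      · filter_upwards [self_mem_nhdsWithin] with z hz
        rw [smul_eq_mul, pow_sub₀ _ hz hmk.le, mul_comm]
    have hlim : Tendsto g (𝓝[≠] 0) (𝓝 0) := hgO.trans_tendsto <| by
      simpa [zero_pow (Nat.sub_ne_zero_of_lt hmk)] using
        ((continuous_pow (k - m)).tendsto (0 : 𝕜)).mono_left nhdsWithin_le_nhds
    exact hg0 (tendsto_nhds_unique (hg.continuousAt.continuousWithinAt) hlim)

theorem AnalyticAt.isBigO_sub_comp_neg {f : 𝕜 → E} (hf : AnalyticAt 𝕜 f 0) {k : ℕ}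
    (hk : Even k) (hO : f =O[𝓝 0] fun z => z ^ k) :
    (fun z => f z - f (-z)) =O[𝓝 0] fun z => z ^ (k + 1) := by
  obtain ⟨g, hg, hfg⟩ := hf.exists_eventuallyEq_pow_smul_of_isBigO hO
  have hg₁ : (fun z => g z - g 0) =O[𝓝 0] fun z => z ^ 1 := by
    simpa using hg.differentiableAt.isBigO_sub
  have hodd : (fun z => g z - g (-z)) =O[𝓝 0] fun z => z ^ 1 :=
    (hg₁.sub hg₁.comp_neg_pow).congr_left fun z => by abel
  refine ((isBigO_refl (fun z : 𝕜 => z ^ k) _).smul hodd).congr' ?_ ?_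
  · have hneg : Tendsto (fun z : 𝕜 => -z) (𝓝 0) (𝓝 0) := by
      simpa using (continuous_neg (G := 𝕜)).tendsto 0
    filter_upwards [hfg, hneg.eventually hfg] with z hz hz'
    rw [hz, hz', hk.neg_pow, smul_sub]
  · exact .of_forall fun z => by simp only [smul_eq_mul, ← pow_add]

end OddPart

section MatrixAnalysis

variable {l m n : Type*} [Fintype l] [Fintype m] [Fintype n]

theorem Matrix.norm_mul_le_card_mul {R : Type*} [NonUnitalNormedRing R]
    (A : Matrix l m R) (B : Matrix m n R) : ‖A * B‖ ≤ Fintype.card m * (‖A‖ * ‖B‖) := by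
  refine (Matrix.norm_le_iff (by positivity)).2 fun i j => ?_
  calc ‖(A * B) i j‖ ≤ ∑ k, ‖A i k‖ * ‖B k j‖ :=
        (norm_sum_le _ _).trans (Finset.sum_le_sum fun k _ => norm_mul_le _ _)
    _ ≤ ∑ _k : m, ‖A‖ * ‖B‖ := Finset.sum_le_sum fun k _ =>
        mul_le_mul (norm_entry_le_entrywise_sup_norm A) (norm_entry_le_entrywise_sup_norm B)
          (norm_nonneg _) (norm_nonneg _)
    _ = Fintype.card m * (‖A‖ * ‖B‖) := by simp

theorem Asymptotics.IsBigO.matrix_mul {α R S : Type*} [NonUnitalNormedRing R] [NormedRing S]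
    [NormMulClass S] {F : Filter α} {f : α → Matrix l m R} {g : α → Matrix m n R} {u v : α → S}
    (hf : f =O[F] u) (hg : g =O[F] v) : (fun x => f x * g x) =O[F] fun x => u x * v x :=
  (isBigO_of_le' F fun x => (norm_mul_le_card_mul (f x) (g x)).trans
    (le_of_eq (by rw [Real.norm_of_nonneg (by positivity)]))).trans (hf.norm_left.mul hg.norm_left)

variable {𝕜 E R : Type*} [NontriviallyNormedField 𝕜] [NormedAddCommGroup E] [NormedSpace 𝕜 E]

theorem Matrix.analyticAt_iff [NormedAddCommGroup R] [NormedSpace 𝕜 R]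
    {f : E → Matrix m n R} {x : E} :
    AnalyticAt 𝕜 f x ↔ ∀ i j, AnalyticAt 𝕜 (fun y => f y i j) x := by
  change AnalyticAt 𝕜 (fun y i => f y i) x ↔ _
  rw [analyticAt_pi_iff]
  exact forall_congr' fun i => analyticAt_pi_iff

theorem AnalyticAt.matrix_mul [NormedRing R] [NormedAlgebra 𝕜 R] {f : E → Matrix l m R}
    {g : E → Matrix m n R} {x : E} (hf : AnalyticAt 𝕜 f x) (hg : AnalyticAt 𝕜 g x) :
    AnalyticAt 𝕜 (fun y => f y * g y) x :=
  Matrix.analyticAt_iff.2 fun i j => by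
    simp only [Matrix.mul_apply]
    exact Finset.analyticAt_fun_sum _ fun k _ =>
      (Matrix.analyticAt_iff.1 hf i k).mul (Matrix.analyticAt_iff.1 hg k j)

theorem Matrix.analyticAt_exp_smul {ι 𝕂 : Type*} [Fintype ι] [DecidableEq ι] [RCLike 𝕂]
    (B : Matrix ι ι 𝕂) (t : 𝕂) : AnalyticAt 𝕂 (fun t : 𝕂 => exp (t • B)) t :=
  Matrix.analyticAt_iff.2 fun i j => Matrix.analyticAt_exp_smul_apply B i j t

end MatrixAnalysis

theorem add_sub_two_nsmul_eq_of_mul_eq_one {R : Type*} [Ring R] {p q e p' e' : R}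
    (hqp : q * p' = 1) (hee : e' * e = 1) :
    p + q - 2 • e = (p - e - (p' - e')) + (1 - q) * (p' - e') + q * (p' - e') * (1 - e) := by
  symm
  calc _ = p - e - q * p' * e + q * (e' * e) := by noncomm_ring
    _ = _ := by rw [hqp, hee]; noncomm_ring

theorem add_mul_add_sub_four_eq_of_mul_eq_one {R : Type*} [Ring R] {p q p' q' : R}
    (h₁ : q' * p = 1) (h₂ : p' * q = 1) (h₃ : q * p' = 1) :
    (p' + q') * (p + q) - 4 = q' * q * (p' * p - 1) ^ 2 := by
  have hyx : q' * q * (p' * p) = 1 := by rw [← mul_assoc, mul_assoc q', h₃, mul_one, h₁]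
  calc (p' + q') * (p + q) - 4 = p' * p + p' * q + q' * p + q' * q - 4 := by noncomm_ring
    _ = p' * p + q' * q - 2 := by rw [h₁, h₂, show (4 : R) = 1 + 1 + 2 by norm_num]; abel
    _ = q' * q * (p' * p) * (p' * p) - 2 * (q' * q * (p' * p)) + q' * q := by
      rw [hyx, one_mul, mul_one]; abel
    _ = q' * q * (p' * p - 1) ^ 2 := by noncomm_ring

section Adjoint

variable {𝕜 ι R : Type*} [NontriviallyNormedField 𝕜] [Fintype ι] [DecidableEq ι]
  [NormedCommRing R] {P Q E : 𝕜 → Matrix ι ι R} {k : ℕ}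

theorem isBigO_add_sub_two_nsmul_of_mul_comp_neg_eq_one [NormedSpace 𝕜 R] (hk : Even k)
    (hk₀ : k ≠ 0) (hP : AnalyticAt 𝕜 P 0) (hE : AnalyticAt 𝕜 E 0) (hQ : DifferentiableAt 𝕜 Q 0)
    (hE0 : E 0 = 1) (hQP : ∀ t, Q t * P (-t) = 1) (hEE : ∀ t, E (-t) * E t = 1)
    (hPE : (fun t => P t - E t) =O[𝓝 0] fun t => t ^ k) :
    (fun t => P t + Q t - 2 • E t) =O[𝓝 0] fun t => t ^ (k + 1) := by
  have hP0 : P 0 = 1 := by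
    have h : (fun t => P t - E t) =O[𝓝 0] fun t : 𝕜 => ‖t - 0‖ ^ k :=
      hPE.trans (isBigO_of_le _ fun t => by simp)
    simpa [hE0, sub_eq_zero] using h.eq_zero_of_norm_pow hk₀
  have hQ0 : Q 0 = 1 := by simpa [hP0] using hQP 0
  have hodd := (hP.sub hE).isBigO_sub_comp_neg hk hPE
  have hPE' := hPE.comp_neg_pow
  have hQ1 : (fun t => 1 - Q t) =O[𝓝 0] fun t => t :=
    hQ.isBigO_sub.neg_left.congr (fun t => by simp [hQ0]) fun t => sub_zero t
  have hE1 : (fun t => 1 - E t) =O[𝓝 0] fun t => t :=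
    hE.differentiableAt.isBigO_sub.neg_left.congr (fun t => by simp [hE0]) fun t => sub_zero t
  have hQb : Q =O[𝓝 0] fun _ => (1 : 𝕜) := hQ.continuousAt.isBigO_one 𝕜
  have h₁ : (fun t => (1 - Q t) * (P (-t) - E (-t))) =O[𝓝 0] fun t => t ^ (k + 1) :=
    (hQ1.matrix_mul hPE').congr_right fun t => (pow_succ' t k).symm
  have h₂ : (fun t => Q t * (P (-t) - E (-t)) * (1 - E t)) =O[𝓝 0] fun t => t ^ (k + 1) :=
    ((hQb.matrix_mul hPE').matrix_mul hE1).congr_right fun t => by rw [one_mul, pow_succ]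
  exact ((hodd.add h₁).add h₂).congr_left fun t =>
    (add_sub_two_nsmul_eq_of_mul_eq_one (hQP t) (hEE t)).symm

theorem isBigO_add_comp_neg_mul_add_sub_four_of_mul_comp_neg_eq_one
    (hP : ContinuousAt P 0) (hQ : ContinuousAt Q 0) (hE : ContinuousAt E 0)
    (hQP : ∀ t, Q t * P (-t) = 1) (hEE : ∀ t, E (-t) * E t = 1)
    (hPE : (fun t => P t - E t) =O[𝓝 0] fun t => t ^ k) :
    (fun t => (P (-t) + Q (-t)) * (P t + Q t) - 4) =O[𝓝 0] fun t => t ^ (2 * k) := by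
  have hneg : ContinuousAt (fun t : 𝕜 => -t) 0 := continuousAt_neg
  have hEneg : (fun t => E (-t)) =O[𝓝 0] fun _ => (1 : 𝕜) :=
    (hE.comp_of_eq hneg neg_zero).isBigO_one 𝕜
  have hX : (fun t => P (-t) * P t - 1) =O[𝓝 0] fun t => t ^ k := by
    have h₁ := (hPE.comp_neg_pow.matrix_mul (hP.isBigO_one 𝕜)).congr_right fun t => mul_one _
    have h₂ := (hEneg.matrix_mul hPE).congr_right fun t => one_mul _
    refine (h₁.add h₂).congr_left fun t => ?_
    rw [sub_mul, mul_sub, ← hEE t]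
    abel
  have hQQ : (fun t => Q (-t) * Q t) =O[𝓝 0] fun _ => (1 : 𝕜) :=
    ((hQ.comp_of_eq hneg neg_zero).mul hQ).isBigO_one 𝕜
  refine (hQQ.matrix_mul (hX.matrix_mul hX)).congr (fun t => ?_) fun t => by ring
  rw [add_mul_add_sub_four_eq_of_mul_eq_one (by simpa using hQP (-t))
    (mul_eq_one_comm.mp (hQP t)) (hQP t), sq, mul_assoc]

end Adjoint

theorem List.prod_reverse_ofFn_mul_prod_reverse_ofFn_eq_one {M : Type*} [Monoid M] :
    ∀ {s : ℕ} {f g : Fin s → M}, (∀ j, f j * g j.rev = 1) →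
      (List.ofFn f).reverse.prod * (List.ofFn g).reverse.prod = 1
  | 0, _, _, _ => by simp
  | s + 1, f, g, hfg => by
    have ih := prod_reverse_ofFn_mul_prod_reverse_ofFn_eq_one (f := fun j => f j.succ)
      (g := fun j => g j.castSucc) fun j => by simpa [Fin.rev_succ] using hfg j.succ
    have hmid : f 0 * g (Fin.last s) = 1 := by simpa using hfg 0
    rw [List.ofFn_succ (f := f), List.ofFn_succ' g, List.reverse_cons, List.concat_eq_append,
      List.reverse_append, List.prod_append, List.prod_singleton, List.reverse_singleton,
      List.singleton_append, List.prod_cons]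
    calc _ = (List.ofFn fun j => f j.succ).reverse.prod * (f 0 * g (Fin.last s)) *
          (List.ofFn fun j => g j.castSucc).reverse.prod := by simp only [mul_assoc]
      _ = 1 := by rw [hmid, mul_one, ih]

section Composition

variable {ι : Type*} [Fintype ι] [DecidableEq ι] {s : ℕ}

def compositionMethod (S : ℂ → Matrix ι ι ℂ) (α : Fin s → ℂ) (h : ℝ) : Matrix ι ι ℂ :=
  ((List.ofFn fun j => S (α j * h)).reverse).prod

variable {S : ℂ → Matrix ι ι ℂ}

theorem compositionMethod_rev_mul_compositionMethod_neg (hS : ∀ z, S z * S (-z) = 1)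
    (α : Fin s → ℂ) (h : ℝ) :
    compositionMethod S (fun j => α j.rev) h * compositionMethod S α (-h) = 1 :=
  List.prod_reverse_ofFn_mul_prod_reverse_ofFn_eq_one fun j => by
    simpa [mul_neg] using hS (α j.rev * h)

theorem map_conj_compositionMethod (hS : ∀ z, (S z).map (starRingEnd ℂ) = S (starRingEnd ℂ z))
    (α : Fin s → ℂ) (h : ℝ) :
    (compositionMethod S α h).map (starRingEnd ℂ) =
      compositionMethod S (fun j => starRingEnd ℂ (α j)) h := by
  change (starRingEnd ℂ).mapMatrix _ = _
  rw [compositionMethod, map_list_prod, List.map_reverse, List.map_ofFn]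
  congr 3
  funext j
  simp [hS]

theorem analyticAt_compositionMethod (hS : ∀ z, AnalyticAt ℂ S z) (α : Fin s → ℂ) (h : ℝ) :
    AnalyticAt ℝ (compositionMethod S α) h := by
  induction s with
  | zero =>
    exact (analyticAt_const (v := 1)).congr (.of_forall fun t => by simp [compositionMethod])
  | succ s ih =>
    have hsucc : compositionMethod S α =
        fun t => compositionMethod S (fun j => α j.succ) t * S (α 0 * t) :=
      funext fun t => by simp [compositionMethod, List.ofFn_succ]
    have hfirst : AnalyticAt ℝ (fun t : ℝ => S (α 0 * t)) h :=
      (hS _).restrictScalars.comp (analyticAt_const.mul (Complex.ofRealCLM.analyticAt h))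
    rw [hsucc]
    exact (ih fun j => α j.succ).matrix_mul hfirst

end Composition

theorem Matrix.map_ofReal_map_re {m n : Type*} (M : Matrix m n ℂ) :
    (M.map Complex.re).map Complex.ofReal = (2⁻¹ : ℂ) • (M + M.map (starRingEnd ℂ)) := by
  ext i j
  simp [Complex.re_eq_add_conj, div_eq_inv_mul]

section RealPart

variable {α m n : Type*} [Fintype m] [Fintype n] {l : Filter α} {g : α → ℝ}

theorem Asymptotics.isBigO_map_ofReal_iff {f : α → Matrix m n ℝ} :
    (fun x => (f x).map Complex.ofReal) =O[l] g ↔ f =O[l] g := by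
  simp only [← isBigO_norm_left (f' := fun x => Matrix.map _ _),
    Matrix.norm_map_eq _ _ Complex.norm_real, isBigO_norm_left]

theorem Asymptotics.IsBigO.map_re_sub {P : α → Matrix m n ℂ} {E : α → Matrix m n ℝ}
    (h : (fun x => P x + (P x).map (starRingEnd ℂ) - 2 • (E x).map Complex.ofReal) =O[l] g) :
    (fun x => (P x).map Complex.re - E x) =O[l] g := by
  refine isBigO_map_ofReal_iff.1 ((h.const_smul_left (2⁻¹ : ℂ)).congr_left fun x => ?_)
  rw [Pi.smul_apply, Matrix.map_sub _ Complex.ofReal_sub, Matrix.map_ofReal_map_re]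
  module

theorem Asymptotics.IsBigO.map_re_mul_map_re_sub_one [DecidableEq m] {M N : α → Matrix m m ℂ}
    (h : (fun x => (M x + (M x).map (starRingEnd ℂ)) * (N x + (N x).map (starRingEnd ℂ)) - 4)
      =O[l] g) :
    (fun x => (M x).map Complex.re * (N x).map Complex.re - 1) =O[l] g := by
  refine isBigO_map_ofReal_iff.1 ((h.const_smul_left (4⁻¹ : ℂ)).congr_left fun x => ?_)
  have hmul : ((M x).map Complex.re * (N x).map Complex.re).map Complex.ofReal =
      ((M x).map Complex.re).map Complex.ofReal * ((N x).map Complex.re).map Complex.ofReal :=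
    Matrix.map_mul (f := Complex.ofRealHom)
  rw [Pi.smul_apply, Matrix.map_sub _ Complex.ofReal_sub, hmul, Matrix.map_ofReal_map_re,
    Matrix.map_ofReal_map_re,
    Matrix.map_one _ Complex.ofReal_zero Complex.ofReal_one, smul_mul_smul_comm,
    show (4 : Matrix m m ℂ) = (4 : ℂ) • 1 by rw [Algebra.smul_def, mul_one, map_ofNat]]
  module

end RealPart

theorem symmetric_conjugate_odd_order_real_part
    (d s n : ℕ) (hn : 2 ≤ n)
    (A : Matrix (Fin d) (Fin d) ℝ)
    (S : ℂ → Matrix (Fin d) (Fin d) ℂ)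
    -- `S` is analytic
    (hAnal : ∀ z : ℂ, AnalyticAt ℂ S z)
    -- `S` is time-symmetric
    (hTS : ∀ z : ℂ, S z * S (-z) = 1)
    -- `S` is real: the entrywise conjugate of `S z` is `S z̄`
    (hReal : ∀ z : ℂ, (S z).map (starRingEnd ℂ) = S (starRingEnd ℂ z))
    -- symmetric-conjugate coefficients
    (α : Fin s → ℂ)
    (hSC : ∀ j : Fin s, α (Fin.rev j) = starRingEnd ℂ (α j))
    -- the composition `P h = S (α_s h) ⋯ S (α_1 h)`
    (P : ℝ → Matrix (Fin d) (Fin d) ℂ)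
    (hP : ∀ h : ℝ, P h = ((List.ofFn fun j : Fin s => S (α j * (h : ℂ))).reverse).prod)
    -- ... is of odd order `2n-1`
    (hPord : (fun h : ℝ => P h - exp ((h : ℂ) • A.map Complex.ofReal))
      =O[nhds 0] fun h : ℝ => h ^ (2 * n))
    -- `R h` is the entrywise real part of `P h`
    (R : ℝ → Matrix (Fin d) (Fin d) ℝ)
    (hR : ∀ h : ℝ, R h = (P h).map Complex.re) :
    ((fun h : ℝ => R h - exp (h • A)) =O[nhds 0] fun h : ℝ => h ^ (2 * n + 1)) ∧
      ((fun h : ℝ => R (-h) * R h - 1) =O[nhds 0] fun h : ℝ => h ^ (4 * n)) := by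
  set E : ℝ → Matrix (Fin d) (Fin d) ℂ := fun t => exp ((t : ℂ) • A.map Complex.ofReal)
  set Q : ℝ → Matrix (Fin d) (Fin d) ℂ := fun t => (P t).map (starRingEnd ℂ)
  have hPc : P = compositionMethod S α := funext hP
  have hQc : Q = compositionMethod S fun j => α j.rev := funext fun t => by
    simp only [Q, hPc, map_conj_compositionMethod hReal, hSC]
  have hQP : ∀ t, Q t * P (-t) = 1 := by
    rw [hQc, hPc]; exact compositionMethod_rev_mul_compositionMethod_neg hTS α
  have hEE : ∀ t, E (-t) * E t = 1 := fun t => by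
    rw [← Matrix.exp_add_of_commute _ _ ((Commute.refl _).smul_left _ |>.smul_right _)]
    simp
  have hPa : AnalyticAt ℝ P 0 := hPc ▸ analyticAt_compositionMethod hAnal α 0
  have hQa : AnalyticAt ℝ Q 0 := hQc ▸ analyticAt_compositionMethod hAnal _ 0
  have hEa : AnalyticAt ℝ E 0 :=
    (Matrix.analyticAt_exp_smul _ _).restrictScalars.comp (Complex.ofRealCLM.analyticAt 0)
  have hexp : ∀ t : ℝ, (exp (t • A)).map Complex.ofReal = E t := fun t => by
    rw [Matrix.map_exp_ofReal]; congr 1; ext; simp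
  simp only [hR]
  constructor
  · refine IsBigO.map_re_sub ?_
    simpa only [hexp] using isBigO_add_sub_two_nsmul_of_mul_comp_neg_eq_one ⟨n, by ring⟩
      (by omega) hPa hEa hQa.differentiableAt (by simp [E]) hQP hEE hPord
  · refine IsBigO.map_re_mul_map_re_sub_one ?_
    exact (isBigO_add_comp_neg_mul_add_sub_four_of_mul_comp_neg_eq_one hPa.continuousAt
      hQa.continuousAt hEa.continuousAt hQP hEE hPord).congr_right fun t => by ring
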